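/- Let T' = #·T·$ with sentinels #, $ ∉ Σ. If W is a nonempty string over Σ that is left-maximal in T' and occurs at least twice in T', then there exists a (possibly empty) string V such that WV is right-maximal in T', the number of occurrences of WV in T' equals the number of occurrences of W in T', and the set of left-extensions of WV in T' equals that of W. Consequently WV is a maximal repeat of T'. -/

import Mathlib

/-!
A string occurring twice in `T' = #·T·$` cannot end at the unique `$`, so each of its occurrences
is followed by a letter. If `W` is not right-maximal, all these letters coincide, say with `d`, and
`Wd` has exactly the occurrences of `W`; iterating (the length is bounded by `|T'|`) yields a
right-maximal `WV` with the occurrences of `W`. Equal counts force every occurrence of `W` to extend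
to one of `WV`, so a letter precedes `WV` exactly when it precedes `W`.
-/

/-- Number of (factor) occurrences of `W` in `T`: the number of starting
positions `i` such that `W` is a prefix of `T.drop i`. -/
def occ {α : Type*} [DecidableEq α] (T W : List α) : ℕ :=
  (List.range (T.length + 1)).countP fun i => decide (W <+: T.drop i)

/-- `W` is right-maximal in `T`: at least two distinct right extensions occur. -/
def rightMax {α : Type*} (T W : List α) : Prop :=
  ∃ b c, b ≠ c ∧ (W ++ [b]) <:+: T ∧ (W ++ [c]) <:+: T

/-- `W` is left-maximal in `T`: at least two distinct left extensions occur. -/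
def leftMax {α : Type*} (T W : List α) : Prop :=
  ∃ a c, a ≠ c ∧ (a :: W) <:+: T ∧ (c :: W) <:+: T

open List

section Occurrences

variable {α : Type*}

theorem infix_iff_exists_prefix_drop {S T : List α} : S <:+: T ↔ ∃ i, S <+: T.drop i := by
  refine ⟨fun h => ?_, fun ⟨i, hi⟩ => hi.isInfix.trans (drop_suffix i T).isInfix⟩
  obtain ⟨t, hSt, htT⟩ := infix_iff_prefix_suffix.mp h
  exact ⟨_, suffix_iff_eq_drop.mp htT ▸ hSt⟩

theorem exists_append_singleton_prefix {S l : List α} (h : S <+: l) (hlt : S.length < l.length) :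
    ∃ c, S ++ [c] <+: l := by
  obtain ⟨_ | ⟨c, r⟩, rfl⟩ := h
  · simp at hlt
  · exact ⟨c, r, by simp⟩

/-- An occurrence reaching the end contains `dol`, while any other occurrence lies inside `X`. -/
theorem length_lt_length_drop_of_prefix_drop {X S : List α} {dol : α} (hX : dol ∉ X)
    (hS : S ≠ []) {i j : ℕ} (hij : i ≠ j) (hi : S <+: (X ++ [dol]).drop i)
    (hj : S <+: (X ++ [dol]).drop j) : S.length < ((X ++ [dol]).drop i).length := by
  by_contra! hle
  have hSi : S = (X ++ [dol]).drop i := hi.eq_of_length_le hle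
  have hiX : i ≤ X.length := by
    by_contra! hXi
    exact hS (hSi ▸ drop_eq_nil_of_le (by simp; omega))
  have hdol : dol ∈ S := by simp [hSi, drop_append_of_le_length hiX]
  have hlen := congrArg length hSi
  have hjlen := hj.length_le
  simp only [length_drop, length_append, length_singleton] at hlen hjlen
  rw [drop_append_of_le_length (by omega)] at hj
  have hSX : S <+: X.drop j :=
    prefix_of_prefix_length_le hj (prefix_append _ _) (by simp; omega)
  exact hX (mem_of_mem_drop (hSX.subset hdol))

variable [DecidableEq α]

theorem length_le_of_occ_pos {T S : List α} (h : 0 < occ T S) : S.length ≤ T.length := by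
  obtain ⟨i, -, hi⟩ := countP_pos_iff.mp h
  exact (of_decide_eq_true hi).length_le.trans (by simp)

theorem exists_ne_of_two_le_occ {T S : List α} (h : 2 ≤ occ T S) :
    ∃ i j, i ≠ j ∧ S <+: T.drop i ∧ S <+: T.drop j := by
  rw [occ, countP_eq_length_filter, ← toFinset_card_of_nodup (nodup_range.filter _)] at h
  obtain ⟨i, j, hi, hj, hij⟩ := Finset.one_lt_card_iff.mp h
  simp only [mem_toFinset, mem_filter, decide_eq_true_eq] at hi hj
  exact ⟨i, j, hij, hi.2, hj.2⟩

theorem occ_append_eq_occ_iff {T S V : List α} :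
    occ T (S ++ V) = occ T S ↔ ∀ i, S <+: T.drop i → S ++ V <+: T.drop i := by
  constructor
  · intro h i hi
    have hsub := monotone_filter_right (range (T.length + 1))
      (p := fun i => decide (S ++ V <+: T.drop i)) (q := fun i => decide (S <+: T.drop i))
      fun k hk => decide_eq_true ((prefix_append S V).trans (of_decide_eq_true hk))
    have heq := hsub.eq_of_length (by simpa only [occ, countP_eq_length_filter] using h)
    -- positions past the end behave like `T.length`
    have hmem :
        min i T.length ∈ filter (fun i => decide (S <+: T.drop i)) (range (T.length + 1)) := by
      simp only [mem_filter, mem_range, decide_eq_true_eq, ← drop_eq_drop_min]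
      exact ⟨by omega, hi⟩
    rw [← heq] at hmem
    simpa only [decide_eq_true_eq, ← drop_eq_drop_min] using (mem_filter.mp hmem).2
  · intro h
    refine countP_congr fun i _ => ?_
    simp only [decide_eq_true_eq]
    exact ⟨fun hi => (prefix_append S V).trans hi, h i⟩

theorem cons_append_infix_iff_of_occ_eq {T W V : List α} (h : occ T (W ++ V) = occ T W)
    (a : α) : a :: (W ++ V) <:+: T ↔ a :: W <:+: T := by
  refine ⟨fun h' => (cons_prefix_cons.mpr ⟨rfl, prefix_append W V⟩).isInfix.trans h',
    fun h' => ?_⟩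
  obtain ⟨i, hi⟩ := infix_iff_exists_prefix_drop.mp h'
  have hlt : i < T.length := by
    by_contra! hTi
    simp [drop_eq_nil_of_le hTi] at hi
  rw [drop_eq_getElem_cons hlt, cons_prefix_cons] at hi
  refine infix_iff_exists_prefix_drop.mpr ⟨i, ?_⟩
  rw [drop_eq_getElem_cons hlt, cons_prefix_cons]
  exact ⟨hi.1, occ_append_eq_occ_iff.mp h (i + 1) hi.2⟩

theorem exists_occ_append_singleton_eq_of_not_rightMax {X S : List α} {dol : α} (hX : dol ∉ X)
    (hS : S ≠ []) (h2 : 2 ≤ occ (X ++ [dol]) S) (hrm : ¬rightMax (X ++ [dol]) S) :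
    ∃ d, occ (X ++ [dol]) (S ++ [d]) = occ (X ++ [dol]) S := by
  obtain ⟨i, j, hij, hi, hj⟩ := exists_ne_of_two_le_occ h2
  have hext : ∀ k, S <+: (X ++ [dol]).drop k → ∃ c, S ++ [c] <+: (X ++ [dol]).drop k := by
    intro k hk
    obtain ⟨m, hmk, hm⟩ : ∃ m, m ≠ k ∧ S <+: (X ++ [dol]).drop m := by
      by_cases hik : i = k
      · exact ⟨j, hik ▸ hij.symm, hj⟩
      · exact ⟨i, hik, hi⟩
    exact exists_append_singleton_prefix hk
      (length_lt_length_drop_of_prefix_drop hX hS hmk.symm hk hm)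
  obtain ⟨d, hd⟩ := hext i hi
  refine ⟨d, occ_append_eq_occ_iff.mpr fun k hk => ?_⟩
  obtain ⟨c, hc⟩ := hext k hk
  obtain rfl : c = d := by
    by_contra hcd
    exact hrm ⟨c, d, hcd, infix_iff_exists_prefix_drop.mpr ⟨k, hc⟩,
      infix_iff_exists_prefix_drop.mpr ⟨i, hd⟩⟩
  exact hc

theorem exists_rightMax_append_of_two_le_occ {X : List α} {dol : α} (hX : dol ∉ X)
    (S : List α) (hS : S ≠ []) (h2 : 2 ≤ occ (X ++ [dol]) S) :
    ∃ V, rightMax (X ++ [dol]) (S ++ V) ∧ occ (X ++ [dol]) (S ++ V) = occ (X ++ [dol]) S := by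
  by_cases hrm : rightMax (X ++ [dol]) S
  · exact ⟨[], by simpa using hrm, by simp⟩
  obtain ⟨d, hd⟩ := exists_occ_append_singleton_eq_of_not_rightMax hX hS h2 hrm
  obtain ⟨V, hV, hocc⟩ :=
    exists_rightMax_append_of_two_le_occ hX (S ++ [d]) (by simp) (hd ▸ h2)
  exact ⟨d :: V, by simpa using hV, by simpa [hd] using hocc⟩
termination_by (X ++ [dol]).length - S.length
decreasing_by
  have := length_le_of_occ_pos (show 0 < occ (X ++ [dol]) (S ++ [d]) by omega)
  simp only [length_append, length_singleton] at this ⊢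
  omega

end Occurrences

theorem right_saturate_leftMax_general {α : Type*} [DecidableEq α]
    (T W : List α) (hash dol : α)
    (hd : dol ∉ T) (hhd : hash ≠ dol)
    (hW : W ≠ [])
    (hlm : leftMax (hash :: T ++ [dol]) W)
    (hocc : 2 ≤ occ (hash :: T ++ [dol]) W) :
    ∃ V : List α,
      rightMax (hash :: T ++ [dol]) (W ++ V) ∧
      occ (hash :: T ++ [dol]) (W ++ V) = occ (hash :: T ++ [dol]) W ∧
      (∀ a : α, (a :: (W ++ V)) <:+: (hash :: T ++ [dol]) ↔
        (a :: W) <:+: (hash :: T ++ [dol])) ∧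
      leftMax (hash :: T ++ [dol]) (W ++ V) := by
  have hX : dol ∉ hash :: T := by simp [hd, hhd.symm]
  obtain ⟨V, hrm, hocc'⟩ := exists_rightMax_append_of_two_le_occ hX W hW hocc
  have hleft := cons_append_infix_iff_of_occ_eq hocc'
  obtain ⟨a, c, hac, ha, hc⟩ := hlm
  exact ⟨V, hrm, hocc', hleft, a, c, hac, (hleft a).mpr ha, (hleft c).mpr hc⟩

/-- with `T' = # · T · $`, every nonempty left-maximal `W` over
`Σ` occurring at least twice has a right extension `WV` that is
right-maximal, has the same number of occurrences, and the same left
extensions; hence `WV` is a maximal repeat. -/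
theorem right_saturate_leftMax {α : Type*} [DecidableEq α]
    (T W : List α) (hash dol : α)
    (hh : hash ∉ T) (hd : dol ∉ T) (hhd : hash ≠ dol)
    (hW : W ≠ []) (hWsig : ∀ x ∈ W, x ≠ hash ∧ x ≠ dol)
    (hlm : leftMax (hash :: T ++ [dol]) W)
    (hocc : 2 ≤ occ (hash :: T ++ [dol]) W) :
    ∃ V : List α,
      rightMax (hash :: T ++ [dol]) (W ++ V) ∧
      occ (hash :: T ++ [dol]) (W ++ V) = occ (hash :: T ++ [dol]) W ∧
      (∀ a : α, (a :: (W ++ V)) <:+: (hash :: T ++ [dol]) ↔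
        (a :: W) <:+: (hash :: T ++ [dol])) ∧
      leftMax (hash :: T ++ [dol]) (W ++ V) :=
  right_saturate_leftMax_general T W hash dol hd hhd hW hlm hocc
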